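/- Let n ≥ 2, U ⊆ ℝ^n open, μ ∈ ℝ, let v : U → ℝ be continuously differentiable, and let 1 ≤ i < j ≤ n. Define the rotational rigid field ω_{ij}(x) = x_j e_i − x_i e_j. Then at every point of U: (2μ e(v ω_{ij}), e(v ω_{ij})) = μ ( x_i^2 + x_j^2 ) |∇v|^2 + μ ( x_j ∂_i v − x_i ∂_j v )^2. -/

import Mathlib

noncomputable section

/-- The strain tensor `e(u)_{ij} = (∂_i u_j + ∂_j u_i)/2` of a vector field `u` on `ℝⁿ`. -/
def strain (n : ℕ) (u : EuclideanSpace ℝ (Fin n) → EuclideanSpace ℝ (Fin n))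
    (x : EuclideanSpace ℝ (Fin n)) (i j : Fin n) : ℝ :=
  (fderiv ℝ (fun y => u y j) x (EuclideanSpace.single i 1)
    + fderiv ℝ (fun y => u y i) x (EuclideanSpace.single j 1)) / 2

lemma fder_aux (n : ℕ) (v : EuclideanSpace ℝ (Fin n) → ℝ) (x : EuclideanSpace ℝ (Fin n))
    (hv : DifferentiableAt ℝ v x) (i j : Fin n) (a b : ℝ) (d : EuclideanSpace ℝ (Fin n)) :
    fderiv ℝ (fun y => v y * (y j * a - y i * b)) x d
      = fderiv ℝ v x d * (x j * a - x i * b) + v x * (d j * a - d i * b) := by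
  set L : EuclideanSpace ℝ (Fin n) →L[ℝ] ℝ :=
    a • (EuclideanSpace.proj j) - b • (EuclideanSpace.proj i) with hL
  have hLy : ∀ y : EuclideanSpace ℝ (Fin n), L y = y j * a - y i * b := by
    intro y; simp [hL, mul_comm]
  have h1 : HasFDerivAt (fun y => v y * L y) (v x • L + L x • fderiv ℝ v x) x :=
    hv.hasFDerivAt.mul L.hasFDerivAt
  have h2 : (fun y => v y * (y j * a - y i * b)) = fun y => v y * L y := by
    funext y; rw [hLy]
  rw [h2, h1.fderiv]
  simp [hLy, mul_comm]
  ring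

lemma comp_eq (n : ℕ) (v : EuclideanSpace ℝ (Fin n) → ℝ) (i j m : Fin n) :
    (fun y => (v y • (y j • EuclideanSpace.single i (1 : ℝ)
      - y i • EuclideanSpace.single j (1 : ℝ)) : EuclideanSpace ℝ (Fin n)) m)
    = fun y => v y * (y j * (if m = i then 1 else 0) - y i * (if m = j then 1 else 0)) := by
  funext y
  simp [EuclideanSpace.single_apply, mul_ite, mul_comm]

lemma fd_comp (n : ℕ) (v : EuclideanSpace ℝ (Fin n) → ℝ) (x : EuclideanSpace ℝ (Fin n))
    (hvx : DifferentiableAt ℝ v x) (i j m k : Fin n) :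
    fderiv ℝ (fun y => (v y • (y j • EuclideanSpace.single i (1 : ℝ)
        - y i • EuclideanSpace.single j (1 : ℝ)) : EuclideanSpace ℝ (Fin n)) m) x
        (EuclideanSpace.single k 1)
      = fderiv ℝ v x (EuclideanSpace.single k 1)
          * (x j * (if m = i then 1 else 0) - x i * (if m = j then 1 else 0))
        + v x * ((if k = j then 1 else 0) * (if m = i then 1 else 0)
            - (if k = i then 1 else 0) * (if m = j then 1 else 0)) := by
  rw [comp_eq, fder_aux n v x hvx i j]
  have flip : ∀ a b : Fin n, (if a = b then (1:ℝ) else 0) = if b = a then 1 else 0 := by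
    intro a b; simp [eq_comm]
  simp only [EuclideanSpace.single_apply]
  rw [flip j k, flip i k]

lemma strain_eq (n : ℕ) (v : EuclideanSpace ℝ (Fin n) → ℝ) (x : EuclideanSpace ℝ (Fin n))
    (hvx : DifferentiableAt ℝ v x) (i j k l : Fin n) :
    strain n (fun y => v y • (y j • EuclideanSpace.single i (1 : ℝ)
        - y i • EuclideanSpace.single j (1 : ℝ))) x k l
      = (fderiv ℝ v x (EuclideanSpace.single k 1)
            * (x j * (if l = i then 1 else 0) - x i * (if l = j then 1 else 0))
          + fderiv ℝ v x (EuclideanSpace.single l 1)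
            * (x j * (if k = i then 1 else 0) - x i * (if k = j then 1 else 0))) / 2 := by
  rw [strain, fd_comp n v x hvx i j l k, fd_comp n v x hvx i j k l]
  ring

lemma alg_aux (n : ℕ) (μ : ℝ) (g w : Fin n → ℝ) :
    (∑ k : Fin n, ∑ l : Fin n,
        2 * μ * ((g k * w l + g l * w k) / 2) * ((g k * w l + g l * w k) / 2))
      = μ * (∑ l, w l ^ 2) * (∑ k, g k ^ 2) + μ * (∑ k, g k * w k) ^ 2 := by
  have key : ∀ (c : ℝ) (f h : Fin n → ℝ),
      (∑ k : Fin n, ∑ l : Fin n, c * (f k * h l)) = c * ((∑ k, f k) * (∑ l, h l)) := by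
    intro c f h
    rw [Finset.sum_mul_sum, Finset.mul_sum]
    exact Finset.sum_congr rfl fun k _ => by rw [Finset.mul_sum]
  have h : ∀ k l : Fin n,
      2 * μ * ((g k * w l + g l * w k) / 2) * ((g k * w l + g l * w k) / 2)
        = μ / 2 * (g k ^ 2 * w l ^ 2) + (μ * ((g k * w k) * (g l * w l))
          + μ / 2 * (w k ^ 2 * g l ^ 2)) := by intro k l; ring
  simp only [h, Finset.sum_add_distrib]
  rw [key (μ/2) (fun k => g k ^ 2) (fun l => w l ^ 2),
      key μ (fun k => g k * w k) (fun l => g l * w l),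
      key (μ/2) (fun k => w k ^ 2) (fun l => g l ^ 2)]
  ring

/-- For the rotational rigid field `ω_{ij}(x) = x_j e_i − x_i e_j` and a `C¹` scalar `v`:
`(2μ e(v ω_{ij}), e(v ω_{ij})) = μ (x_i² + x_j²) |∇v|² + μ (x_j ∂_i v − x_i ∂_j v)²`. -/
theorem strain_inner_product_rotational_field
    (n : ℕ) (hn : 2 ≤ n) (U : Set (EuclideanSpace ℝ (Fin n))) (hU : IsOpen U)
    (μ : ℝ) (v : EuclideanSpace ℝ (Fin n) → ℝ) (hv : ContDiffOn ℝ 1 v U)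
    (i j : Fin n) (hij : i < j) (x : EuclideanSpace ℝ (Fin n)) (hx : x ∈ U) :
    (∑ k : Fin n, ∑ l : Fin n,
        2 * μ * strain n
            (fun y => v y • (y j • EuclideanSpace.single i (1 : ℝ)
              - y i • EuclideanSpace.single j (1 : ℝ))) x k l *
          strain n
            (fun y => v y • (y j • EuclideanSpace.single i (1 : ℝ)
              - y i • EuclideanSpace.single j (1 : ℝ))) x k l)
      = μ * (x i ^ 2 + x j ^ 2) * (∑ k : Fin n, fderiv ℝ v x (EuclideanSpace.single k 1) ^ 2)
        + μ * (x j * fderiv ℝ v x (EuclideanSpace.single i 1)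
            - x i * fderiv ℝ v x (EuclideanSpace.single j 1)) ^ 2 := by
  have hne : i ≠ j := hij.ne
  have hvx : DifferentiableAt ℝ v x := (hv.contDiffAt (hU.mem_nhds hx)).differentiableAt one_ne_zero
  set g : Fin n → ℝ := fun k => fderiv ℝ v x (EuclideanSpace.single k 1) with hg
  set w : Fin n → ℝ := fun m =>
    x j * (if m = i then 1 else 0) - x i * (if m = j then 1 else 0) with hw
  have hsum : (∑ k : Fin n, ∑ l : Fin n,
      2 * μ * strain n (fun y => v y • (y j • EuclideanSpace.single i (1 : ℝ)
          - y i • EuclideanSpace.single j (1 : ℝ))) x k l *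
        strain n (fun y => v y • (y j • EuclideanSpace.single i (1 : ℝ)
          - y i • EuclideanSpace.single j (1 : ℝ))) x k l)
      = ∑ k : Fin n, ∑ l : Fin n,
          2 * μ * ((g k * w l + g l * w k) / 2) * ((g k * w l + g l * w k) / 2) := by
    refine Finset.sum_congr rfl fun k _ => Finset.sum_congr rfl fun l _ => ?_
    rw [strain_eq n v x hvx i j k l]
  rw [hsum, alg_aux n μ g w]
  have h1 : (∑ l, w l ^ 2) = x i ^ 2 + x j ^ 2 := by
    have hl : ∀ l : Fin n, w l ^ 2 = (if l = i then x j ^ 2 else 0)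
        + (if l = j then x i ^ 2 else 0) := by
      intro l
      by_cases h1 : l = i <;> by_cases h2 : l = j
      · exact absurd (h1 ▸ h2) hne
      all_goals simp [hw, h1, h2, hne, hne.symm]
    simp only [hl, Finset.sum_add_distrib, Finset.sum_ite_eq', Finset.mem_univ, if_true]
    ring
  have h2 : (∑ k, g k * w k) = x j * g i - x i * g j := by
    have hk : ∀ k : Fin n, g k * w k = (if k = i then x j * g i else 0)
        - (if k = j then x i * g j else 0) := by
      intro k
      by_cases h1 : k = i <;> by_cases h2 : k = j
      · exact absurd (h1 ▸ h2) hne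
      all_goals (simp [hw, h1, h2, hne, hne.symm]; try ring)
    simp only [hk, Finset.sum_sub_distrib, Finset.sum_ite_eq', Finset.mem_univ, if_true]
  rw [h1, h2, hg]
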